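/- arXiv:2206.07767 — 5 statements merged into one kernel-verified Lean document; each statement's English description precedes it below -/
import Mathlib

section
/- Let D ≥ 1, let u : ℝ^D → ℝ be 1-Lipschitz, let P be a Borel probability measure on ℝ^D with finite first moment, and let T : ℝ^D → ℝ^D be a measurable map such that the pushforward Q = T♯P has finite first moment and u(x) − u(T(x)) = ‖x − T(x)‖₂ holds for P-almost every x. Then T is an optimal transport map from P to Q: for every coupling π' of P and Q, ∫ ‖x − T(x)‖₂ dP(x) ≤ ∫ ‖x − y‖₂ dπ'(x, y). -/
/-!
Integrating the 1-Lipschitz inequality `u x - u y ≤ ‖x - y‖` against any coupling `π` of `P` and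
`Q` gives `∫ u dP - ∫ u dQ ≤ ∫ ‖x - y‖ dπ` (the easy half of Kantorovich–Rubinstein duality).
For the coupling `(id, T)♯P` ray monotonicity turns this inequality into an equality.
-/

open MeasureTheory

variable {E F : Type*} [NormedAddCommGroup E] [MeasurableSpace E]

theorem LipschitzWith.integrable_of_integrable_norm [OpensMeasurableSpace E]
    [NormedAddCommGroup F] [SecondCountableTopologyEither E F]
    {K : NNReal} {u : E → F} (hu : LipschitzWith K u) {μ : Measure E} [IsFiniteMeasure μ]
    (hμ : Integrable (fun x => ‖x‖) μ) : Integrable u μ := by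
  refine ((hμ.const_mul K).add (integrable_const ‖u 0‖)).mono'
    hu.continuous.aestronglyMeasurable (Filter.Eventually.of_forall fun x => ?_)
  have h := hu.norm_sub_le x 0
  rw [sub_zero] at h
  calc ‖u x‖ ≤ ‖u x - u 0‖ + ‖u 0‖ := norm_le_norm_sub_add _ _
    _ ≤ K * ‖x‖ + ‖u 0‖ := by gcongr

theorem integral_sub_integral_le_integral_norm_sub [OpensMeasurableSpace E]
    [SecondCountableTopology E] {u : E → ℝ} (hu : LipschitzWith 1 u)
    {π : Measure (E × E)} [IsFiniteMeasure π] {μ ν : Measure E}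
    (hfst : π.map Prod.fst = μ) (hsnd : π.map Prod.snd = ν)
    (hμ : Integrable (fun x => ‖x‖) μ) (hν : Integrable (fun y => ‖y‖) ν) :
    ∫ x, u x ∂μ - ∫ y, u y ∂ν ≤ ∫ p, ‖p.1 - p.2‖ ∂π := by
  subst hfst hsnd
  have hu₁ : Integrable (fun p : E × E => u p.1) π :=
    (hu.integrable_of_integrable_norm hμ).comp_measurable measurable_fst
  have hu₂ : Integrable (fun p : E × E => u p.2) π :=
    (hu.integrable_of_integrable_norm hν).comp_measurable measurable_snd
  have hcost : Integrable (fun p : E × E => ‖p.1 - p.2‖) π :=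
    ((hμ.comp_measurable measurable_fst).add (hν.comp_measurable measurable_snd)).mono'
      (continuous_fst.sub continuous_snd).norm.aestronglyMeasurable
      (Filter.Eventually.of_forall fun p => by simpa using norm_sub_le p.1 p.2)
  rw [integral_map measurable_fst.aemeasurable hu.continuous.aestronglyMeasurable,
    integral_map measurable_snd.aemeasurable hu.continuous.aestronglyMeasurable,
    ← integral_sub hu₁ hu₂]
  refine integral_mono (hu₁.sub hu₂) hcost fun p => ?_
  simpa [dist_eq_norm] using (le_abs_self _).trans (hu.dist_le_mul p.1 p.2)

theorem integral_norm_sub_eq_of_ray_monotone {u : E → ℝ} {P : Measure E} {T : E → E}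
    (hT : AEMeasurable T P) (huP : Integrable u P) (huQ : Integrable u (P.map T))
    (hmon : ∀ᵐ x ∂P, u x - u (T x) = ‖x - T x‖) :
    ∫ x, ‖x - T x‖ ∂P = ∫ x, u x ∂P - ∫ y, u y ∂(P.map T) := by
  have huT : Integrable (fun x => u (T x)) P := huQ.comp_aemeasurable hT
  rw [integral_map hT huQ.aestronglyMeasurable, ← integral_sub huP huT]
  exact integral_congr_ae (hmon.mono fun x hx => hx.symm)

theorem ray_monotone_map_optimal_general
    (D : ℕ)
    (u : EuclideanSpace ℝ (Fin D) → ℝ) (hu : LipschitzWith 1 u)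
    (P : Measure (EuclideanSpace ℝ (Fin D))) [IsProbabilityMeasure P]
    (hPmom : Integrable (fun x => ‖x‖) P)
    (T : EuclideanSpace ℝ (Fin D) → EuclideanSpace ℝ (Fin D))
    (hT : Measurable T)
    (hQmom : Integrable (fun y => ‖y‖) (P.map T))
    (hmon : ∀ᵐ x ∂P, u x - u (T x) = ‖x - T x‖) :
    ∀ (π' : Measure (EuclideanSpace ℝ (Fin D) × EuclideanSpace ℝ (Fin D))),
      IsProbabilityMeasure π' →
      π'.map Prod.fst = P → π'.map Prod.snd = P.map T →
      ∫ x, ‖x - T x‖ ∂P ≤ ∫ p, ‖p.1 - p.2‖ ∂π' := by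
  intro π' _ hfst hsnd
  rw [integral_norm_sub_eq_of_ray_monotone hT.aemeasurable
    (hu.integrable_of_integrable_norm hPmom) (hu.integrable_of_integrable_norm hQmom) hmon]
  exact integral_sub_integral_le_integral_norm_sub hu hfst hsnd hPmom hQmom

/-- Ray monotone transport maps are optimal. -/
theorem ray_monotone_map_optimal
    (D : ℕ) (hD : 1 ≤ D)
    (u : EuclideanSpace ℝ (Fin D) → ℝ) (hu : LipschitzWith 1 u)
    (P : Measure (EuclideanSpace ℝ (Fin D))) [IsProbabilityMeasure P]
    (hPmom : Integrable (fun x => ‖x‖) P)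
    (T : EuclideanSpace ℝ (Fin D) → EuclideanSpace ℝ (Fin D))
    (hT : Measurable T)
    (hQmom : Integrable (fun y => ‖y‖) (P.map T))
    (hmon : ∀ᵐ x ∂P, u x - u (T x) = ‖x - T x‖) :
    ∀ (π' : Measure (EuclideanSpace ℝ (Fin D) × EuclideanSpace ℝ (Fin D))),
      IsProbabilityMeasure π' →
      π'.map Prod.fst = P → π'.map Prod.snd = P.map T →
      ∫ x, ‖x - T x‖ ∂P ≤ ∫ p, ‖p.1 - p.2‖ ∂π' :=
  ray_monotone_map_optimal_general D u hu P hPmom T hT hQmom hmon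
end

section
/- Let D ≥ 1, let S ⊆ ℝ^D be a nonempty compact set, and let f* : ℝ^D → ℝ be 1-Lipschitz. Then for every ε > 0 there exist N ≥ 1 and parameters a : Fin N → ℝ^D, b : Fin N → ℝ such that the MinFunnel function u(x) = min over n of (‖x − a_n‖₂ + b_n) satisfies sup_{x ∈ S} |u(x) − f*(x)| ≤ ε. -/
/-! Sample the target on a finite `ε/2`-net `a` of `S` and take `b n = f* (a n)`. Since `f*` is
1-Lipschitz, every funnel `x ↦ ‖x - a n‖ + f* (a n)` lies above `f*`, and the funnel of a net point
within `ε/2` of `x` exceeds `f* x` by at most `2 · ε/2` there. -/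

section LipschitzFunnel

variable {α ι : Type*} [PseudoMetricSpace α] {f : α → ℝ} (a : ι → α) (x : α)

lemma LipschitzWith.le_dist_add (hf : LipschitzWith 1 f) (y : α) : f x ≤ dist x y + f y := by
  simpa [add_comm] using hf.le_add_mul x y

lemma LipschitzWith.le_ciInf_dist_add [Nonempty ι] (hf : LipschitzWith 1 f) :
    f x ≤ ⨅ n, (dist x (a n) + f (a n)) :=
  le_ciInf fun n => hf.le_dist_add x (a n)

lemma LipschitzWith.ciInf_dist_add_le (hf : LipschitzWith 1 f) (n : ι) :
    ⨅ m, (dist x (a m) + f (a m)) ≤ f x + 2 * dist x (a n) := by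
  have hbdd : BddBelow (Set.range fun m => dist x (a m) + f (a m)) :=
    ⟨f x, Set.forall_mem_range.2 fun m => hf.le_dist_add x (a m)⟩
  calc ⨅ m, (dist x (a m) + f (a m))
      ≤ dist x (a n) + f (a n) := ciInf_le hbdd n
    _ ≤ f x + 2 * dist x (a n) := by
        linarith [hf.le_dist_add (a n) x, dist_comm x (a n)]

lemma LipschitzWith.abs_ciInf_dist_add_sub_le (hf : LipschitzWith 1 f) {δ : ℝ} {n : ι}
    (hn : dist x (a n) ≤ δ) :
    |(⨅ m, (dist x (a m) + f (a m))) - f x| ≤ 2 * δ := by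
  have : Nonempty ι := ⟨n⟩
  have hlower := hf.le_ciInf_dist_add a x
  have hupper := hf.ciInf_dist_add_le a x n
  rw [abs_le]
  constructor <;> linarith [dist_nonneg (x := x) (y := a n)]

end LipschitzFunnel

lemma IsCompact.exists_fin_cover_balls {α : Type*} [PseudoMetricSpace α] {s : Set α}
    (hs : IsCompact s) {r : ℝ} (hr : 0 < r) :
    ∃ (N : ℕ) (a : Fin N → α), ∀ x ∈ s, ∃ n, dist x (a n) < r := by
  obtain ⟨t, -, htfin, hcover⟩ := hs.finite_cover_balls hr
  obtain ⟨N, a, hrange⟩ := htfin.fin_embedding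
  refine ⟨N, a, fun x hx => ?_⟩
  obtain ⟨y, hyt, hxy⟩ := Set.mem_iUnion₂.1 (hcover hx)
  obtain ⟨n, rfl⟩ : y ∈ Set.range a := hrange ▸ hyt
  exact ⟨n, hxy⟩

theorem minFunnel_universal_approximation_general
    (D : ℕ)
    (S : Set (EuclideanSpace ℝ (Fin D))) (hSne : S.Nonempty) (hS : IsCompact S)
    (fstar : EuclideanSpace ℝ (Fin D) → ℝ) (hf : LipschitzWith 1 fstar)
    (ε : ℝ) (hε : 0 < ε) :
    ∃ (N : ℕ) (_ : 1 ≤ N) (a : Fin N → EuclideanSpace ℝ (Fin D)) (b : Fin N → ℝ),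
      ∀ x ∈ S, |(⨅ n : Fin N, (‖x - a n‖ + b n)) - fstar x| ≤ ε := by
  obtain ⟨N, a, hnet⟩ := hS.exists_fin_cover_balls (half_pos hε)
  obtain ⟨x₀, hx₀⟩ := hSne
  obtain ⟨n₀, -⟩ := hnet x₀ hx₀
  refine ⟨N, n₀.pos, a, fun n => fstar (a n), fun x hx => ?_⟩
  obtain ⟨n, hn⟩ := hnet x hx
  simp_rw [← dist_eq_norm]
  simpa [mul_div_cancel₀] using hf.abs_ciInf_dist_add_sub_le a x hn.le

/-- MinFunnels are universal approximators of 1-Lipschitz functions on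
nonempty compact sets. -/
theorem minFunnel_universal_approximation
    (D : ℕ) (hD : 1 ≤ D)
    (S : Set (EuclideanSpace ℝ (Fin D))) (hSne : S.Nonempty) (hS : IsCompact S)
    (fstar : EuclideanSpace ℝ (Fin D) → ℝ) (hf : LipschitzWith 1 fstar)
    (ε : ℝ) (hε : 0 < ε) :
    ∃ (N : ℕ) (_ : 1 ≤ N) (a : Fin N → EuclideanSpace ℝ (Fin D)) (b : Fin N → ℝ),
      ∀ x ∈ S, |(⨅ n : Fin N, (‖x - a n‖ + b n)) - fstar x| ≤ ε :=
  minFunnel_universal_approximation_general D S hSne hS fstar hf ε hε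
end

section
/- Let D ≥ 1, let u : ℝ^D → ℝ be 1-Lipschitz, and let x, y ∈ ℝ^D with x ≠ y satisfy u(x) − u(y) = ‖x − y‖₂. Let z = t·x + (1−t)·y for some t ∈ (0, 1), and suppose u is Fréchet differentiable at z. Then the gradient of u at z equals (x − y)/‖x − y‖₂. -/
/-!
If `u` is 1-Lipschitz and `u x - u y = ‖x - y‖`, the two Lipschitz bounds along `y → p → x`
must both be equalities for every `p` on the segment, so `u` grows with unit slope along it.
Hence at an interior point the derivative in the direction `x - y` equals `‖x - y‖`, while
Lipschitz continuity bounds the norm of the gradient by `1`; equality in Cauchy–Schwarz then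
forces the gradient to be the unit vector `‖x - y‖⁻¹ • (x - y)`.
-/

open Set

open scoped RealInnerProductSpace

section TransportSegment

variable {E : Type*} [NormedAddCommGroup E] [NormedSpace ℝ E]
  {f : E → ℝ} {x y : E}

theorem LipschitzWith.apply_segment_eq_of_sub_eq_norm (hf : LipschitzWith 1 f)
    (hxy : f x - f y = ‖x - y‖) {s : ℝ} (hs : s ∈ Icc (0 : ℝ) 1) :
    f (s • x + (1 - s) • y) = f y + s * ‖x - y‖ := by
  obtain ⟨hs0, hs1⟩ := hs
  set p := s • x + (1 - s) • y
  have lipschitz_bound : ∀ a b : E, f a - f b ≤ ‖a - b‖ := fun a b => by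
    simpa [Real.dist_eq, dist_eq_norm] using (le_abs_self _).trans (hf.dist_le_mul a b)
  have hpy : ‖p - y‖ = s * ‖x - y‖ := by
    rw [show p - y = s • (x - y) by module, norm_smul, Real.norm_of_nonneg hs0]
  have hxp : ‖x - p‖ = (1 - s) * ‖x - y‖ := by
    rw [show x - p = (1 - s) • (x - y) by module, norm_smul,
      Real.norm_of_nonneg (sub_nonneg.2 hs1)]
  linarith [lipschitz_bound p y, lipschitz_bound x p]

theorem LipschitzWith.hasFDerivAt_apply_sub_eq_norm_of_sub_eq_norm (hf : LipschitzWith 1 f)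
    (hxy : f x - f y = ‖x - y‖) {t : ℝ} (ht : t ∈ Ioo (0 : ℝ) 1) {f' : E →L[ℝ] ℝ}
    (hf' : HasFDerivAt f f' (t • x + (1 - t) • y)) :
    f' (x - y) = ‖x - y‖ := by
  have hγ : HasDerivAt (fun s : ℝ => s • x + (1 - s) • y) (x - y) t := by
    convert ((hasDerivAt_id' t).smul_const x).fun_add
      (((hasDerivAt_id' t).const_sub 1).smul_const y) using 1
    module
  have hcomp : HasDerivAt (fun s : ℝ => f (s • x + (1 - s) • y)) (f' (x - y)) t :=
    hf'.comp_hasDerivAt t hγ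
  have hline : HasDerivAt (fun s : ℝ => f y + s * ‖x - y‖) ‖x - y‖ t := by
    simpa using ((hasDerivAt_id t).mul_const ‖x - y‖).const_add (f y)
  refine hcomp.unique (hline.congr_of_eventuallyEq ?_)
  filter_upwards [Icc_mem_nhds ht.1 ht.2] with s hs
  exact hf.apply_segment_eq_of_sub_eq_norm hxy hs

end TransportSegment

theorem eq_inv_norm_smul_of_norm_le_one_of_inner_eq_norm {F : Type*} [NormedAddCommGroup F]
    [InnerProductSpace ℝ F] {g v : F} (hg : ‖g‖ ≤ 1) (hv : v ≠ 0) (h : ⟪g, v⟫ = ‖v‖) :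
    g = ‖v‖⁻¹ • v := by
  have hv' : 0 < ‖v‖ := norm_pos_iff.2 hv
  have hg1 : ‖g‖ = 1 := by
    refine le_antisymm hg (le_of_mul_le_mul_right ?_ hv')
    calc 1 * ‖v‖ = ⟪g, v⟫ := by rw [one_mul, h]
      _ ≤ ‖g‖ * ‖v‖ := real_inner_le_norm g v
  have hsmul : ‖v‖ • g = v := by
    simpa [hg1] using inner_eq_norm_mul_iff_real.1 (h.trans (by rw [hg1, one_mul]))
  rw [eq_inv_smul_iff₀ hv'.ne', hsmul]

theorem gradient_on_transport_ray_general
    (D : ℕ)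
    (u : EuclideanSpace ℝ (Fin D) → ℝ) (hu : LipschitzWith 1 u)
    (x y : EuclideanSpace ℝ (Fin D)) (hne : x ≠ y)
    (hxy : u x - u y = ‖x - y‖)
    (t : ℝ) (ht : t ∈ Set.Ioo (0 : ℝ) 1)
    (z : EuclideanSpace ℝ (Fin D)) (hz : z = t • x + (1 - t) • y)
    (hdiff : DifferentiableAt ℝ u z) :
    gradient u z = ‖x - y‖⁻¹ • (x - y) := by
  subst hz
  have hgrad : HasFDerivAt u (InnerProductSpace.toDual ℝ _ (gradient u _)) _ :=
    hasGradientAt_iff_hasFDerivAt.1 hdiff.hasGradientAt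
  have hnorm : ‖gradient u (t • x + (1 - t) • y)‖ ≤ 1 := by
    have := hgrad.le_of_lipschitz hu
    rwa [LinearIsometryEquiv.norm_map, NNReal.coe_one] at this
  have hinner : ⟪gradient u (t • x + (1 - t) • y), x - y⟫ = ‖x - y‖ := by
    simpa using hu.hasFDerivAt_apply_sub_eq_norm_of_sub_eq_norm hxy ht hgrad
  exact eq_inv_norm_smul_of_norm_le_one_of_inner_eq_norm hnorm (sub_ne_zero.2 hne) hinner

/-- On the interior of a transport segment of a 1-Lipschitz function, the
gradient (where it exists) is the unit direction of the segment. -/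
theorem gradient_on_transport_ray
    (D : ℕ) (hD : 1 ≤ D)
    (u : EuclideanSpace ℝ (Fin D) → ℝ) (hu : LipschitzWith 1 u)
    (x y : EuclideanSpace ℝ (Fin D)) (hne : x ≠ y)
    (hxy : u x - u y = ‖x - y‖)
    (t : ℝ) (ht : t ∈ Set.Ioo (0 : ℝ) 1)
    (z : EuclideanSpace ℝ (Fin D)) (hz : z = t • x + (1 - t) • y)
    (hdiff : DifferentiableAt ℝ u z) :
    gradient u z = ‖x - y‖⁻¹ • (x - y) :=
  gradient_on_transport_ray_general D u hu x y hne hxy t ht z hz hdiff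
end

section
/- Let D ≥ 1, let N ≥ 1, and let a : Fin N → ℝ^D and b : Fin N → ℝ be parameters such that the centers a_n are pairwise distinct and for all indices n₁ ≠ n₂ one has ‖a_{n₁} − a_{n₂}‖₂ ≠ |b_{n₁} − b_{n₂}|. Let u(x) = min over n of (‖x − a_n‖₂ + b_n) be the associated MinFunnel, and let x ∈ ℝ^D be a point at which u is Fréchet differentiable. Then there is exactly one index m with u(x) = ‖x − a_m‖₂ + b_m, and moreover x ≠ a_m. -/
/-!
Every funnel lies above `u` and touches it at the indices attaining the minimum. Where `u` is
differentiable and `x` is not the centre of such a funnel, the derivative of `u` at `x` is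
therefore that of the funnel, namely `⟪(x - aₙ) / ‖x - aₙ‖, ·⟫`. Two minimizing funnels thus have
their centres on a common ray from `x`, which forces `‖aₙ₁ - aₙ₂‖ = |bₙ₁ - bₙ₂|`. If instead
`x = aₙ`, genericity makes `n` the only minimizing index, so near `x` the function `u` is the cone
`‖· - aₙ‖ + bₙ`, which is not differentiable at its apex.
-/

open Filter Topology

theorem iInf_eventuallyEq_of_forall_lt {ι X : Type*} [Finite ι] [TopologicalSpace X]
    {f : ι → X → ℝ} {x : X} {n : ι} (hf : ∀ k, ContinuousAt (f k) x)
    (hlt : ∀ k, k ≠ n → f n x < f k x) : (fun z => ⨅ k, f k z) =ᶠ[𝓝 x] f n := by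
  have : Nonempty ι := ⟨n⟩
  have hmin : ∀ᶠ z in 𝓝 x, ∀ k, f n z ≤ f k z := by
    refine eventually_all.2 fun k => ?_
    rcases eq_or_ne k n with rfl | hk
    · exact .of_forall fun _ => le_rfl
    · exact ((hf n).eventually_lt (hf k) (hlt k hk)).mono fun _ => le_of_lt
  filter_upwards [hmin] with z hz
  exact le_antisymm (ciInf_le (Set.finite_range _).bddBelow n) (le_ciInf hz)

theorem HasFDerivAt.eq_of_eventuallyLE_of_eq {E : Type*} [NormedAddCommGroup E]
    [NormedSpace ℝ E] {g h : E → ℝ} {g' h' : E →L[ℝ] ℝ} {x : E} (hg : HasFDerivAt g g' x)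
    (hh : HasFDerivAt h h' x) (hle : g ≤ᶠ[𝓝 x] h) (heq : g x = h x) : g' = h' := by
  have hmin : IsLocalMin (h - g) x := by
    filter_upwards [hle] with z hz
    simp only [Pi.sub_apply, heq, sub_self, sub_nonneg, hz]
  exact (sub_eq_zero.1 (hmin.hasFDerivAt_eq_zero (hh.sub hg))).symm

theorem not_differentiableAt_norm_sub_add_const_self {E : Type*} [NormedAddCommGroup E]
    [NormedSpace ℝ E] [Nontrivial E] (a : E) (c : ℝ) :
    ¬DifferentiableAt ℝ (fun z => ‖z - a‖ + c) a := by
  intro h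
  have hshift : DifferentiableAt ℝ (fun z : E => ‖z + a - a‖) 0 :=
    (differentiableAt_comp_add_right a).2 <| by
      rw [zero_add]; exact (differentiableAt_add_const_iff c).1 h
  exact not_differentiableAt_norm_zero E (by simpa using hshift)

theorem hasFDerivAt_norm_sub {E : Type*} [NormedAddCommGroup E] [InnerProductSpace ℝ E]
    {a x : E} (hx : x ≠ a) :
    HasFDerivAt (fun z => ‖z - a‖) (innerSL ℝ (‖x - a‖⁻¹ • (x - a))) x := by
  have hpos : 0 < ‖x - a‖ := norm_pos_iff.2 (sub_ne_zero.2 hx)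
  have h := ((hasStrictFDerivAt_norm_sq (x - a)).hasFDerivAt.comp x
    ((hasFDerivAt_id x).sub_const a)).sqrt (by simp [hpos.ne'])
  convert h using 1
  · funext z
    simp [Real.sqrt_sq (norm_nonneg _)]
  · ext v
    simp only [ContinuousLinearMap.comp_id, smul_apply, map_smul, coe_innerSL_apply, smul_eq_mul,
      nsmul_eq_mul, Nat.cast_ofNat, Function.comp_apply, id_eq, Real.sqrt_sq hpos.le]
    field_simp

section Normed

variable {E ι : Type*} [NormedAddCommGroup E] [Finite ι]

noncomputable def minFunnel (a : ι → E) (b : ι → ℝ) (z : E) : ℝ :=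
  ⨅ n, ‖z - a n‖ + b n

variable {a : ι → E} {b : ι → ℝ} {x : E}

theorem minFunnel_le (a : ι → E) (b : ι → ℝ) (z : E) (n : ι) :
    minFunnel a b z ≤ ‖z - a n‖ + b n :=
  ciInf_le (Set.finite_range _).bddBelow n

theorem exists_minFunnel_eq [Nonempty ι] (a : ι → E) (b : ι → ℝ) (x : E) :
    ∃ m, minFunnel a b x = ‖x - a m‖ + b m :=
  let ⟨m, hm⟩ := exists_eq_ciInf_of_finite (f := fun n => ‖x - a n‖ + b n)
  ⟨m, hm.symm⟩

theorem minFunnel_ne_center [NormedSpace ℝ E] [Nontrivial E] {n : ι}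
    (hgen : ∀ n₁ n₂ : ι, n₁ ≠ n₂ → ‖a n₁ - a n₂‖ ≠ |b n₁ - b n₂|)
    (hdiff : DifferentiableAt ℝ (minFunnel a b) x) (hn : minFunnel a b x = ‖x - a n‖ + b n) :
    x ≠ a n := by
  rintro rfl
  have hlt : ∀ k, k ≠ n → ‖a n - a n‖ + b n < ‖a n - a k‖ + b k := by
    intro k hk
    have hle := minFunnel_le a b (a n) k
    rw [hn, sub_self, norm_zero, zero_add] at hle
    rw [sub_self, norm_zero, zero_add]
    refine hle.lt_of_ne fun heq => hgen n k hk.symm ?_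
    rw [abs_of_nonneg (by linarith [norm_nonneg (a n - a k)])]
    linarith
  have hloc := iInf_eventuallyEq_of_forall_lt
    (fun k => ((continuous_id.sub continuous_const).norm.add continuous_const).continuousAt) hlt
  exact not_differentiableAt_norm_sub_add_const_self (a n) (b n)
    (hdiff.congr_of_eventuallyEq hloc.symm)

end Normed

section Inner

variable {E ι : Type*} [NormedAddCommGroup E] [InnerProductSpace ℝ E] [Finite ι]
  {a : ι → E} {b : ι → ℝ} {x : E}

theorem fderiv_minFunnel {n : ι} (hdiff : DifferentiableAt ℝ (minFunnel a b) x)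
    (hn : minFunnel a b x = ‖x - a n‖ + b n) (hx : x ≠ a n) :
    fderiv ℝ (minFunnel a b) x = innerSL ℝ (‖x - a n‖⁻¹ • (x - a n)) :=
  hdiff.hasFDerivAt.eq_of_eventuallyLE_of_eq ((hasFDerivAt_norm_sub hx).add_const (b n))
    (.of_forall (minFunnel_le a b · n)) hn

theorem sameRay_of_minFunnel_eq {n₁ n₂ : ι} (hdiff : DifferentiableAt ℝ (minFunnel a b) x)
    (h₁ : minFunnel a b x = ‖x - a n₁‖ + b n₁) (h₂ : minFunnel a b x = ‖x - a n₂‖ + b n₂)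
    (hx₁ : x ≠ a n₁) (hx₂ : x ≠ a n₂) : SameRay ℝ (x - a n₁) (x - a n₂) := by
  have hunit : ‖x - a n₁‖⁻¹ • (x - a n₁) = ‖x - a n₂‖⁻¹ • (x - a n₂) :=
    innerSL_inj.1 <|
      (fderiv_minFunnel hdiff h₁ hx₁).symm.trans (fderiv_minFunnel hdiff h₂ hx₂)
  exact sameRay_iff_inv_norm_smul_eq.2 (.inr (.inr hunit))

theorem eq_of_minFunnel_eq [Nontrivial E] {n₁ n₂ : ι}
    (hgen : ∀ n₁ n₂ : ι, n₁ ≠ n₂ → ‖a n₁ - a n₂‖ ≠ |b n₁ - b n₂|)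
    (hdiff : DifferentiableAt ℝ (minFunnel a b) x)
    (h₁ : minFunnel a b x = ‖x - a n₁‖ + b n₁) (h₂ : minFunnel a b x = ‖x - a n₂‖ + b n₂) :
    n₁ = n₂ := by
  by_contra hne
  have hray := sameRay_of_minFunnel_eq hdiff h₁ h₂
    (minFunnel_ne_center hgen hdiff h₁) (minFunnel_ne_center hgen hdiff h₂)
  refine hgen n₂ n₁ (Ne.symm hne) ?_
  calc ‖a n₂ - a n₁‖ = ‖(x - a n₁) - (x - a n₂)‖ := by rw [sub_sub_sub_cancel_left]
    _ = |‖x - a n₁‖ - ‖x - a n₂‖| := hray.norm_sub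
    _ = |b n₂ - b n₁| := by congr 1; linarith

end Inner

theorem minFunnel_unique_argmin_general
    (D : ℕ) (hD : 1 ≤ D) (N : ℕ) (hN : 1 ≤ N)
    (a : Fin N → EuclideanSpace ℝ (Fin D)) (b : Fin N → ℝ)
    (hgen : ∀ n₁ n₂ : Fin N, n₁ ≠ n₂ → ‖a n₁ - a n₂‖ ≠ |b n₁ - b n₂|)
    (x : EuclideanSpace ℝ (Fin D))
    (hdiff : DifferentiableAt ℝ (fun z => ⨅ n : Fin N, (‖z - a n‖ + b n)) x) :
    ∃ m : Fin N,
      (⨅ n : Fin N, (‖x - a n‖ + b n)) = ‖x - a m‖ + b m ∧ x ≠ a m ∧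
      ∀ m' : Fin N, (⨅ n : Fin N, (‖x - a n‖ + b n)) = ‖x - a m'‖ + b m' →
        m' = m := by
  have : Nonempty (Fin N) := ⟨⟨0, hN⟩⟩
  have : NeZero D := ⟨by omega⟩
  obtain ⟨m, hm⟩ := exists_minFunnel_eq a b x
  exact ⟨m, hm, minFunnel_ne_center hgen hdiff hm,
    fun m' hm' => eq_of_minFunnel_eq hgen hdiff hm' hm⟩

/-- At a differentiability point of a MinFunnel (with generic parameters),
the minimum is attained at exactly one funnel, and the point is not the
center of that funnel. -/
theorem minFunnel_unique_argmin
    (D : ℕ) (hD : 1 ≤ D) (N : ℕ) (hN : 1 ≤ N)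
    (a : Fin N → EuclideanSpace ℝ (Fin D)) (b : Fin N → ℝ)
    (hdist : ∀ n₁ n₂ : Fin N, n₁ ≠ n₂ → a n₁ ≠ a n₂)
    (hgen : ∀ n₁ n₂ : Fin N, n₁ ≠ n₂ → ‖a n₁ - a n₂‖ ≠ |b n₁ - b n₂|)
    (x : EuclideanSpace ℝ (Fin D))
    (hdiff : DifferentiableAt ℝ (fun z => ⨅ n : Fin N, (‖z - a n‖ + b n)) x) :
    ∃ m : Fin N,
      (⨅ n : Fin N, (‖x - a n‖ + b n)) = ‖x - a m‖ + b m ∧ x ≠ a m ∧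
      ∀ m' : Fin N, (⨅ n : Fin N, (‖x - a n‖ + b n)) = ‖x - a m'‖ + b m' →
        m' = m :=
  minFunnel_unique_argmin_general D hD N hN a b hgen x hdiff
end

section
/- Let D ≥ 1, let P be a Borel probability measure on ℝ^D with finite first moment, let u : ℝ^D → ℝ be 1-Lipschitz, and let T : ℝ^D → ℝ^D be a measurable map such that Q = T♯P has finite first moment and u(x) − u(T(x)) = ‖x − T(x)‖₂ holds for P-almost every x. Let f : ℝ^D → ℝ be any 1-Lipschitz function satisfying ∫ f(x) dP(x) − ∫ f(y) dQ(y) = ∫ ‖x − T(x)‖₂ dP(x). Then f(x) − f(T(x)) = ‖x − T(x)‖₂ holds for P-almost every x. -/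
open MeasureTheory

/-!
A 1-Lipschitz `f` satisfies `f x - f (T x) ≤ ‖x - T x‖` pointwise, so the optimality of `f`
in the dual says that this pointwise inequality between integrable functions integrates to an
equality, which forces it to be an equality almost everywhere.
-/

theorem LipschitzWith.integrable_comp {α E F : Type*} [MeasurableSpace α] {μ : Measure α}
    [IsFiniteMeasure μ] [NormedAddCommGroup E] [NormedAddCommGroup F] {K : NNReal} {f : E → F}
    (hf : LipschitzWith K f) {g : α → E} (hg : Integrable g μ) : Integrable (f ∘ g) μ := by
  refine ((hg.norm.const_mul K).add (integrable_const ‖f 0‖)).mono'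
    (hf.continuous.comp_aestronglyMeasurable hg.1) (ae_of_all _ fun a => ?_)
  calc ‖f (g a)‖ ≤ ‖f (g a) - f 0‖ + ‖f 0‖ := norm_le_norm_sub_add _ _
    _ ≤ K * ‖g a - 0‖ + ‖f 0‖ := by gcongr; exact hf.norm_sub_le _ _
    _ = K * ‖g a‖ + ‖f 0‖ := by rw [sub_zero]

theorem LipschitzWith.ae_sub_comp_eq_dist_of_integral_eq {X : Type*} [PseudoMetricSpace X]
    [MeasurableSpace X] {μ : Measure X} {f : X → ℝ} (hf : LipschitzWith 1 f) {T : X → X}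
    (hfi : Integrable f μ) (hfT : Integrable (fun x => f (T x)) μ)
    (hdist : Integrable (fun x => dist x (T x)) μ)
    (h : ∫ x, f x ∂μ - ∫ x, f (T x) ∂μ = ∫ x, dist x (T x) ∂μ) :
    ∀ᵐ x ∂μ, f x - f (T x) = dist x (T x) := by
  have hle : ∀ x, f x - f (T x) ≤ dist x (T x) := fun x => by
    simpa using (le_abs_self _).trans (hf.dist_le_mul x (T x))
  rw [← integral_sub hfi hfT] at h
  exact (integral_eq_iff_of_ae_le (hfi.sub hfT) hdist (ae_of_all _ hle)).1 h

theorem dual_optimal_is_ray_monotone_general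
    (D : ℕ)
    (P : Measure (EuclideanSpace ℝ (Fin D))) [IsProbabilityMeasure P]
    (hPmom : Integrable (fun x => ‖x‖) P)
    (T : EuclideanSpace ℝ (Fin D) → EuclideanSpace ℝ (Fin D))
    (hT : Measurable T)
    (hQmom : Integrable (fun y => ‖y‖) (P.map T))
    (f : EuclideanSpace ℝ (Fin D) → ℝ) (hf : LipschitzWith 1 f)
    (hopt : ∫ x, f x ∂P - ∫ y, f y ∂(P.map T) = ∫ x, ‖x - T x‖ ∂P) :
    ∀ᵐ x ∂P, f x - f (T x) = ‖x - T x‖ := by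
  have hid : Integrable id P := (integrable_norm_iff aestronglyMeasurable_id).1 hPmom
  have hTi : Integrable T P :=
    ((integrable_norm_iff aestronglyMeasurable_id).1 hQmom).comp_measurable hT
  rw [integral_map hT.aemeasurable hf.continuous.aestronglyMeasurable] at hopt
  simp only [← dist_eq_norm] at hopt ⊢
  exact hf.ae_sub_comp_eq_dist_of_integral_eq (hf.integrable_comp hid) (hf.integrable_comp hTi)
    (by simpa only [dist_eq_norm, Pi.sub_apply, id] using (hid.sub hTi).norm) hopt

/-- Any 1-Lipschitz maximizer of the Kantorovich dual is itself ray
monotone along the optimal map `T`. -/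
theorem dual_optimal_is_ray_monotone
    (D : ℕ) (hD : 1 ≤ D)
    (P : Measure (EuclideanSpace ℝ (Fin D))) [IsProbabilityMeasure P]
    (hPmom : Integrable (fun x => ‖x‖) P)
    (u : EuclideanSpace ℝ (Fin D) → ℝ) (hu : LipschitzWith 1 u)
    (T : EuclideanSpace ℝ (Fin D) → EuclideanSpace ℝ (Fin D))
    (hT : Measurable T)
    (hQmom : Integrable (fun y => ‖y‖) (P.map T))
    (hmon : ∀ᵐ x ∂P, u x - u (T x) = ‖x - T x‖)
    (f : EuclideanSpace ℝ (Fin D) → ℝ) (hf : LipschitzWith 1 f)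
    (hopt : ∫ x, f x ∂P - ∫ y, f y ∂(P.map T) = ∫ x, ‖x - T x‖ ∂P) :
    ∀ᵐ x ∂P, f x - f (T x) = ‖x - T x‖ :=
  dual_optimal_is_ray_monotone_general D P hPmom T hT hQmom f hf hopt
end
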